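/- Fix 0 < α₁ < α₂ ≤ 1 and let N(ℓ), A(ℓ) be as in the Mertens-type estimate. Then lim_{ℓ→∞} N(ℓ)/A(ℓ) = 6/π² and lim_{ℓ→∞} N(ℓ)/ℓ² = 3(α₂−α₁)/π². -/

import Mathlib

open Filter

noncomputable def latticeCount (α₁ α₂ ℓ : ℝ) : ℕ :=
  Set.ncard {p : ℕ × ℕ | 0 < p.1 ∧ 0 < p.2 ∧ Nat.gcd p.1 p.2 = 1 ∧
    (p.2 : ℝ) ≤ ℓ ∧ α₁ ≤ (p.1 : ℝ) / p.2 ∧ (p.1 : ℝ) / p.2 ≤ α₂}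

/-!
Möbius inversion over the gcd writes the number of coprime points of the cone
`α₁ b ≤ a ≤ α₂ b`, `0 < b ≤ ℓ` as `∑_{d ≤ ℓ} μ(d) T(ℓ / d)`, where `T(r)` counts all lattice points
of the cone of height at most `r`. Counting column by column, `T(r) = (α₂ - α₁) r² / 2 + O(r)`, so
`N(ℓ) / ℓ² = (α₂ - α₁) / 2 · ∑_{d ≤ ℓ} μ(d) / d² + O(log ℓ / ℓ)`, and `∑ μ(d) / d² = 1 / ζ(2) = 6 / π²`.
-/
open Finset ArithmeticFunction
open scoped ArithmeticFunction.Moebius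

theorem hasSum_moebius_div_sq :
    HasSum (fun n : ℕ => (μ n : ℝ) / n ^ 2) (6 / Real.pi ^ 2) := by
  have h2 : 1 < (2 : ℂ).re := by norm_num
  have hL : LSeries (fun n => (μ n : ℂ)) 2 = ((6 / Real.pi ^ 2 : ℝ) : ℂ) := by
    have h := LSeries_zeta_mul_Lseries_moebius h2
    rw [LSeries_zeta_eq_riemannZeta h2, riemannZeta_two] at h
    have hπ : (Real.pi : ℂ) ≠ 0 := by exact_mod_cast Real.pi_ne_zero
    push_cast
    field_simp at h ⊢
    linear_combination h
  rw [← Complex.hasSum_ofReal, ← hL]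
  have hsum : HasSum (LSeries.term (fun n => (μ n : ℂ)) 2) _ :=
    (LSeriesSummable_moebius_iff.mpr h2).LSeriesHasSum
  convert hsum using 1
  funext n
  rcases eq_or_ne n 0 with rfl | hn
  · simp
  · rw [LSeries.term_of_ne_zero hn, ← Nat.cast_two (R := ℂ), Complex.cpow_natCast]
    push_cast
    rfl

theorem card_filter_eq_one_eq_sum_moebius {ι : Type*} (s : Finset ι) (g : ι → ℕ) (n : ℕ)
    (hg : ∀ x ∈ s, 0 < g x ∧ g x ≤ n) :
    (#(s.filter (g · = 1)) : ℤ) = ∑ d ∈ Icc 1 n, μ d * #(s.filter (d ∣ g ·)) := by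
  have hsum : ∀ x ∈ s,
      (if g x = 1 then 1 else 0 : ℤ) = ∑ d ∈ Icc 1 n, if d ∣ g x then μ d else 0 := by
    intro x hx
    obtain ⟨hpos, hle⟩ := hg x hx
    have hdiv : (Icc 1 n).filter (· ∣ g x) = (g x).divisors := by
      ext d
      simp only [mem_filter, mem_Icc, Nat.mem_divisors]
      constructor
      · rintro ⟨-, hd⟩
        exact ⟨hd, hpos.ne'⟩
      · rintro ⟨hd, -⟩
        exact ⟨⟨Nat.pos_of_dvd_of_pos hd hpos, (Nat.le_of_dvd hpos hd).trans hle⟩, hd⟩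
    rw [← sum_filter, hdiv, ← coe_mul_zeta_apply, moebius_mul_coe_zeta, one_apply]
  rw [card_filter, Nat.cast_sum, sum_congr rfl fun x hx => by exact_mod_cast hsum x hx, sum_comm]
  refine sum_congr rfl fun d _ => ?_
  rw [← sum_filter, sum_const, nsmul_eq_mul, mul_comm]

theorem sum_Icc_one_natCast (m : ℕ) : ∑ b ∈ Icc 1 m, (b : ℝ) = m * (m + 1) / 2 := by
  induction m with
  | zero => simp
  | succ k ih =>
    rw [sum_Icc_succ_top (by omega), ih]
    push_cast
    ring

theorem abs_card_filter_Icc_sub_le {x y : ℝ} {m : ℕ} (hx : 0 < x) (hxy : x ≤ y) (hy : y ≤ m) :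
    |(#((Icc 1 m).filter fun a : ℕ => x ≤ a ∧ (a : ℝ) ≤ y) : ℝ) - (y - x)| ≤ 1 := by
  have hIcc : (Icc 1 m).filter (fun a : ℕ => x ≤ a ∧ (a : ℝ) ≤ y) = Icc ⌈x⌉₊ ⌊y⌋₊ := by
    ext a
    simp only [mem_filter, mem_Icc, Nat.ceil_le, Nat.le_floor_iff (hx.le.trans hxy)]
    constructor
    · exact fun h => h.2
    · rintro ⟨hxa, hay⟩
      refine ⟨⟨?_, by exact_mod_cast hay.trans hy⟩, hxa, hay⟩
      exact_mod_cast (Nat.one_le_ceil_iff.mpr hx).trans (Nat.ceil_le.mpr hxa)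
  have hceil : (⌈x⌉₊ : ℝ) < x + 1 := Nat.ceil_lt_add_one hx.le
  have hfloor : y < ⌊y⌋₊ + 1 := Nat.lt_floor_add_one y
  have hle : ⌈x⌉₊ ≤ ⌊y⌋₊ + 1 := by
    have : (⌈x⌉₊ : ℝ) < (⌊y⌋₊ + 2 : ℕ) := by push_cast; linarith
    have := Nat.cast_lt.mp this
    omega
  rw [hIcc, Nat.card_Icc, Nat.cast_sub hle, abs_le]
  push_cast
  constructor <;> linarith [Nat.le_ceil x, Nat.floor_le (hx.le.trans hxy)]

/-- The bound `a ≤ ⌊r⌋` only makes the set finite: the cone conditions imply it when `α₂ ≤ 1`. -/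
noncomputable def conePoints (α₁ α₂ r : ℝ) : Finset (ℕ × ℕ) :=
  (Icc 1 ⌊r⌋₊ ×ˢ Icc 1 ⌊r⌋₊).filter fun p => α₁ * p.2 ≤ p.1 ∧ (p.1 : ℝ) ≤ α₂ * p.2

section Cone

variable {α₁ α₂ : ℝ}

theorem mul_mem_conePoints_iff {r : ℝ} {d : ℕ} (hd : 0 < d) {a b : ℕ} :
    (d * a, d * b) ∈ conePoints α₁ α₂ r ↔ (a, b) ∈ conePoints α₁ α₂ (r / d) := by
  have hd' : (0 : ℝ) < d := by exact_mod_cast hd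
  simp only [conePoints, mem_filter, mem_product, mem_Icc, Nat.floor_div_natCast,
    Nat.le_div_iff_mul_le hd, Nat.one_le_iff_ne_zero, mul_ne_zero_iff, hd.ne', ne_eq,
    not_false_eq_true, and_true, mul_comm d, Nat.cast_mul, ← mul_assoc]
  rw [mul_le_mul_iff_of_pos_right hd', mul_le_mul_iff_of_pos_right hd']

theorem card_filter_dvd_gcd_conePoints (r : ℝ) {d : ℕ} (hd : 0 < d) :
    #((conePoints α₁ α₂ r).filter fun p => d ∣ Nat.gcd p.1 p.2) = #(conePoints α₁ α₂ (r / d)) := by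
  symm
  refine card_nbij' (fun p => (d * p.1, d * p.2)) (fun p => (p.1 / d, p.2 / d)) ?_ ?_ ?_ ?_
  · intro p hp
    simp only [mem_coe, mem_filter]
    exact ⟨mul_mem_conePoints_iff hd |>.mpr hp, by simp [Nat.gcd_mul_left]⟩
  · rintro ⟨a, b⟩ hp
    simp only [mem_coe, mem_filter, Nat.dvd_gcd_iff] at hp
    obtain ⟨hp, ⟨a, rfl⟩, ⟨b, rfl⟩⟩ := hp
    simpa [Nat.mul_div_cancel_left _ hd] using (mul_mem_conePoints_iff hd).mp hp
  · intro p _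
    simp [Nat.mul_div_cancel_left _ hd]
  · rintro ⟨a, b⟩ hp
    simp only [mem_coe, mem_filter, Nat.dvd_gcd_iff] at hp
    simp [Nat.mul_div_cancel' hp.2.1, Nat.mul_div_cancel' hp.2.2]

theorem card_conePoints_eq_sum (r : ℝ) :
    #(conePoints α₁ α₂ r) = ∑ b ∈ Icc 1 ⌊r⌋₊,
      #((Icc 1 ⌊r⌋₊).filter fun a : ℕ => α₁ * b ≤ a ∧ (a : ℝ) ≤ α₂ * b) := by
  rw [conePoints, card_filter, sum_product_right]
  exact sum_congr rfl fun b _ => (card_filter _ _).symm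

theorem abs_card_conePoints_sub_le (h1 : 0 < α₁) (h2 : α₁ ≤ α₂) (h3 : α₂ ≤ 1) (r : ℝ) :
    |(#(conePoints α₁ α₂ r) : ℝ) - (α₂ - α₁) * (⌊r⌋₊ * (⌊r⌋₊ + 1) / 2)| ≤ ⌊r⌋₊ := by
  rw [card_conePoints_eq_sum, ← sum_Icc_one_natCast, mul_sum, Nat.cast_sum, ← sum_sub_distrib]
  calc _ ≤ ∑ b ∈ Icc 1 ⌊r⌋₊, (1 : ℝ) :=
        (abs_sum_le_sum_abs _ _).trans (sum_le_sum fun b hb => ?_)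
    _ = ⌊r⌋₊ := by simp
  have hb : (1 : ℝ) ≤ b ∧ (b : ℝ) ≤ ⌊r⌋₊ := by
    simp only [mem_Icc] at hb
    exact ⟨by exact_mod_cast hb.1, by exact_mod_cast hb.2⟩
  rw [sub_mul]
  exact abs_card_filter_Icc_sub_le (by nlinarith) (by nlinarith) (by nlinarith)

theorem abs_card_conePoints_sub_le_two_mul (h1 : 0 < α₁) (h2 : α₁ ≤ α₂) (h3 : α₂ ≤ 1)
    {r : ℝ} (hr : 0 ≤ r) :
    |(#(conePoints α₁ α₂ r) : ℝ) - (α₂ - α₁) / 2 * r ^ 2| ≤ 2 * r := by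
  have hm := abs_card_conePoints_sub_le h1 h2 h3 r
  have hfl : (⌊r⌋₊ : ℝ) ≤ r := Nat.floor_le hr
  have hlt : r < ⌊r⌋₊ + 1 := Nat.lt_floor_add_one r
  have hm0 : (0 : ℝ) ≤ ⌊r⌋₊ := Nat.cast_nonneg _
  have hc : 0 ≤ α₂ - α₁ := by linarith
  rw [abs_le] at hm ⊢
  constructor <;> nlinarith [mul_nonneg hc (sub_nonneg.mpr hfl), mul_nonneg hc hm0,
    mul_nonneg (sub_nonneg.mpr h3) hm0, mul_nonneg hc (sub_nonneg.mpr hlt.le)]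

theorem latticeCount_eq_card_filter_coprime (h3 : α₂ ≤ 1) (ℓ : ℝ) :
    latticeCount α₁ α₂ ℓ = #((conePoints α₁ α₂ ℓ).filter fun p => Nat.gcd p.1 p.2 = 1) := by
  rw [latticeCount, ← Set.ncard_coe_finset]
  congr 1
  ext ⟨a, b⟩
  simp only [Set.mem_ofPred_eq, coe_filter, conePoints, mem_filter, mem_product, mem_Icc]
  constructor
  · rintro ⟨ha, hb, hg, hbℓ, hl, hr⟩
    have hb' : (0 : ℝ) < b := by exact_mod_cast hb
    rw [le_div_iff₀ hb'] at hl
    rw [div_le_iff₀ hb'] at hr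
    have haℓ : (a : ℝ) ≤ ℓ := by nlinarith
    exact ⟨⟨⟨⟨ha, (Nat.le_floor_iff' ha.ne').mpr haℓ⟩, hb, (Nat.le_floor_iff' hb.ne').mpr hbℓ⟩,
      hl, hr⟩, hg⟩
  · rintro ⟨⟨⟨⟨ha, -⟩, hb, hbℓ⟩, hl, hr⟩, hg⟩
    have hb' : (0 : ℝ) < b := by exact_mod_cast hb
    exact ⟨ha, hb, hg, ((Nat.le_floor_iff' (by omega)).mp hbℓ), (le_div_iff₀ hb').mpr hl,
      (div_le_iff₀ hb').mpr hr⟩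

theorem latticeCount_eq_sum_moebius (h3 : α₂ ≤ 1) (ℓ : ℝ) :
    (latticeCount α₁ α₂ ℓ : ℝ) = ∑ d ∈ Icc 1 ⌊ℓ⌋₊, (μ d : ℝ) * #(conePoints α₁ α₂ (ℓ / d)) := by
  have hgcd : ∀ p ∈ conePoints α₁ α₂ ℓ, 0 < Nat.gcd p.1 p.2 ∧ Nat.gcd p.1 p.2 ≤ ⌊ℓ⌋₊ := by
    intro p hp
    simp only [conePoints, mem_filter, mem_product, mem_Icc] at hp
    exact ⟨Nat.gcd_pos_of_pos_right _ (by omega),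
      (Nat.le_of_dvd (by omega) (Nat.gcd_dvd_right _ _)).trans hp.1.2.2⟩
  have h := card_filter_eq_one_eq_sum_moebius _ _ _ hgcd
  rw [latticeCount_eq_card_filter_coprime h3]
  refine (congrArg (Int.cast : ℤ → ℝ) h).trans ?_
  push_cast
  refine sum_congr rfl fun d hd => ?_
  rw [card_filter_dvd_gcd_conePoints _ (by simp only [mem_Icc] at hd; omega)]

theorem abs_latticeCount_div_sq_sub_le (h1 : 0 < α₁) (h2 : α₁ ≤ α₂) (h3 : α₂ ≤ 1) {ℓ : ℝ}
    (hℓ : 1 ≤ ℓ) :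
    |(latticeCount α₁ α₂ ℓ : ℝ) / ℓ ^ 2 - (α₂ - α₁) / 2 * ∑ d ∈ Icc 1 ⌊ℓ⌋₊, (μ d : ℝ) / d ^ 2|
      ≤ 2 * (1 + Real.log ℓ) / ℓ := by
  have hℓ0 : 0 < ℓ := by linarith
  have hharm : ∑ d ∈ Icc 1 ⌊ℓ⌋₊, (d : ℝ)⁻¹ ≤ 1 + Real.log ℓ := by
    have h := harmonic_le_one_add_log ⌊ℓ⌋₊
    simp only [harmonic_eq_sum_Icc, Rat.cast_sum, Rat.cast_inv, Rat.cast_natCast] at h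
    exact h.trans (by gcongr; exacts [Nat.cast_pos.mpr (Nat.floor_pos.mpr hℓ), Nat.floor_le hℓ0.le])
  have hsplit : (latticeCount α₁ α₂ ℓ : ℝ) / ℓ ^ 2
      - (α₂ - α₁) / 2 * ∑ d ∈ Icc 1 ⌊ℓ⌋₊, (μ d : ℝ) / d ^ 2
      = ∑ d ∈ Icc 1 ⌊ℓ⌋₊, (μ d : ℝ) *
        ((#(conePoints α₁ α₂ (ℓ / d)) - (α₂ - α₁) / 2 * (ℓ / d) ^ 2) / ℓ ^ 2) := by
    rw [latticeCount_eq_sum_moebius h3, sum_div, mul_sum, ← sum_sub_distrib]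
    refine sum_congr rfl fun d _ => ?_
    field_simp
  rw [hsplit]
  calc _ ≤ ∑ d ∈ Icc 1 ⌊ℓ⌋₊, 2 / ℓ * (d : ℝ)⁻¹ :=
        (abs_sum_le_sum_abs _ _).trans (sum_le_sum fun d hd => ?_)
    _ ≤ 2 * (1 + Real.log ℓ) / ℓ := by
        rw [← mul_sum, div_mul_eq_mul_div]
        gcongr
  have hd : (0 : ℝ) < d := by simp only [mem_Icc] at hd; exact_mod_cast hd.1
  have hμ : |(μ d : ℝ)| ≤ 1 := by exact_mod_cast abs_moebius_le_one
  have hcone := abs_card_conePoints_sub_le_two_mul h1 h2 h3 (div_nonneg hℓ0.le hd.le)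
  rw [abs_mul, abs_div, abs_of_pos (by positivity : (0 : ℝ) < ℓ ^ 2)]
  calc _ ≤ 1 * (2 * (ℓ / d) / ℓ ^ 2) := by gcongr
    _ = 2 / ℓ * (d : ℝ)⁻¹ := by field_simp

theorem tendsto_latticeCount_div_sq (h1 : 0 < α₁) (h2 : α₁ ≤ α₂) (h3 : α₂ ≤ 1) :
    Tendsto (fun ℓ : ℝ => (latticeCount α₁ α₂ ℓ : ℝ) / ℓ ^ 2) atTop
      (nhds (3 * (α₂ - α₁) / Real.pi ^ 2)) := by
  have hpartial : Tendsto (fun ℓ : ℝ => (α₂ - α₁) / 2 * ∑ d ∈ Icc 1 ⌊ℓ⌋₊, (μ d : ℝ) / d ^ 2)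
      atTop (nhds (3 * (α₂ - α₁) / Real.pi ^ 2)) := by
    have h := (hasSum_moebius_div_sq.tendsto_sum_nat.comp (tendsto_add_atTop_nat 1)).comp
      (tendsto_nat_floor_atTop (α := ℝ))
    convert h.const_mul ((α₂ - α₁) / 2) using 2 with ℓ
    · rw [Function.comp_apply, Function.comp_apply, range_eq_Ico,
        sum_eq_sum_Ico_succ_bot (Nat.succ_pos _), Nat.succ_eq_add_one, Ico_add_one_right_eq_Icc]
      simp
    · ring
  have herror : Tendsto (fun ℓ : ℝ => 2 * (1 + Real.log ℓ) / ℓ) atTop (nhds 0) := by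
    have h := (tendsto_inv_atTop_zero.add
      (Real.tendsto_pow_log_div_mul_add_atTop 1 0 1 one_ne_zero)).const_mul 2
    simp only [add_zero, mul_zero, pow_one, one_mul] at h
    refine h.congr fun ℓ => ?_
    ring
  refine tendsto_of_tendsto_of_dist hpartial (squeeze_zero' ?_ ?_ herror)
  · exact Eventually.of_forall fun _ => dist_nonneg
  · filter_upwards [eventually_ge_atTop 1] with ℓ hℓ
    rw [dist_comm, Real.dist_eq]
    exact abs_latticeCount_div_sq_sub_le h1 h2 h3 hℓ

end Cone

theorem stmt_12 (α₁ α₂ : ℝ) (h1 : 0 < α₁) (h2 : α₁ < α₂) (h3 : α₂ ≤ 1) :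
    Tendsto (fun ℓ : ℝ =>
        (latticeCount α₁ α₂ ℓ : ℝ) / ((α₂ - α₁) * ℓ ^ 2 / 2)) atTop
      (nhds (6 / Real.pi ^ 2)) ∧
    Tendsto (fun ℓ : ℝ => (latticeCount α₁ α₂ ℓ : ℝ) / ℓ ^ 2) atTop
      (nhds (3 * (α₂ - α₁) / Real.pi ^ 2)) := by
  have hlim := tendsto_latticeCount_div_sq h1 h2.le h3
  refine ⟨?_, hlim⟩
  have hc : α₂ - α₁ ≠ 0 := sub_ne_zero.mpr h2.ne'
  convert hlim.div_const ((α₂ - α₁) / 2) using 2 with ℓ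
  · field_simp
  · field_simp
    ring
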